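/- arXiv:2105.00541 — 4 statements merged into one kernel-verified Lean document; each statement's English description precedes it below -/
import Mathlib

section
/- Let V_1, …, V_k be subsets of {1,…,n} and M_V the associated variable-valued matrix over K. For every subset S ⊆ {1,…,n}, the columns of M_V indexed by S are linearly independent over K if and only if every nonempty subset U ⊆ S satisfies |{i ∈ {1,…,k} : V_i ∩ U ≠ ∅}| ≥ |U|. -/
/-!
A rank count gives one direction: independent columns indexed by `U` live in the coordinate
subspace of the rows `i` with `V_i ∩ U ≠ ∅`, so there are at least `|U|` such rows.
Conversely, Hall's marriage theorem turns the condition into an injection `f` from `S` to the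
rows with `j ∈ V_{f j}`. The square minor of `M_V` on rows `f(S)` and columns `S` is then a
nonzero polynomial: specialising `x_{f j, j}` to `1` and all other variables to `0` turns it
into the identity matrix.
-/

open MvPolynomial

/-- The polynomial ring `ℝ[x_{i,j}]` in `k·n` independent variables. -/
abbrev PR (k n : ℕ) : Type := MvPolynomial (Fin k × Fin n) ℝ

/-- Its field of fractions `K`. -/
abbrev FF (k n : ℕ) : Type := FractionRing (PR k n)

/-- The variable-valued matrix `M_V` over `K` attached to a collection
`V = (V_1, …, V_k)` of subsets of `{1,…,n}`: the `(i,j)` entry is `x_{i,j}` if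
`j ∈ V_i` and `0` otherwise. -/
noncomputable def MV (k n : ℕ) (V : Fin k → Finset (Fin n)) :
    Matrix (Fin k) (Fin n) (FF k n) :=
  Matrix.of fun i j =>
    if j ∈ V i then algebraMap (PR k n) (FF k n) (X (i, j)) else 0

/-- Linear independence over `F` of the columns of a matrix indexed by a set `S`. -/
def ColsIndep {k n : ℕ} {F : Type*} [Field F] (M : Matrix (Fin k) (Fin n) F)
    (S : Finset (Fin n)) : Prop :=
  LinearIndependent F (fun j : {x : Fin n // x ∈ S} => fun i : Fin k => M i (j : Fin n))

open Finset Function Matrix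

theorem LinearIndependent.card_le_card_of_forall_notMem_eq_zero {ι κ F : Type*} [Field F]
    [Fintype ι] {v : ι → κ → F} (hv : LinearIndependent F v) {T : Finset κ}
    (hT : ∀ j, ∀ i ∉ T, v j i = 0) : Fintype.card ι ≤ #T := by
  let r : ι → T → F := fun j i => v j i
  have hvr : v = ExtendByZero.linearMap F ((↑) : T → κ) ∘ r := by
    ext j i
    by_cases hi : i ∈ T
    · simpa [r] using (Subtype.val_injective.extend_apply (r j) 0 ⟨i, hi⟩).symm
    · rw [hT j i hi, Function.comp_apply, ExtendByZero.linearMap_apply,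
        extend_apply' _ _ _ (by simpa)]
      rfl
  have hr : LinearIndependent F r := LinearIndependent.of_comp _ (hvr ▸ hv)
  simpa using hr.fintype_card_le_finrank

theorem Matrix.linearIndependent_cols_of_det_submatrix_ne_zero {m n ι R : Type*}
    [CommRing R] [IsDomain R] [Fintype ι] [DecidableEq ι] {A : Matrix m n R} (f : ι → m)
    (c : ι → n) (h : (A.submatrix f c).det ≠ 0) : LinearIndependent R fun j i => A i (c j) :=
  LinearIndependent.of_comp (LinearMap.funLeft R R f) (linearIndependent_cols_of_det_ne_zero h)

theorem ColsIndep.mono {k n : ℕ} {F : Type*} [Field F] {M : Matrix (Fin k) (Fin n) F}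
    {S U : Finset (Fin n)} (h : ColsIndep M S) (hUS : U ⊆ S) :
    ColsIndep M U :=
  h.comp _ (Set.inclusion_injective (coe_subset.2 hUS))

theorem MV_apply_of_notMem {k n : ℕ} {V : Fin k → Finset (Fin n)} {i : Fin k} {j : Fin n}
    (h : j ∉ V i) : MV k n V i j = 0 := by
  simp [MV, h]

theorem det_submatrix_MV_ne_zero {k n : ℕ} (V : Fin k → Finset (Fin n)) {ι : Type*}
    [Fintype ι] [DecidableEq ι] {m : ι → Fin k} {c : ι → Fin n} (hm : Injective m)
    (hc : Injective c) (hV : ∀ j, c j ∈ V (m j)) : ((MV k n V).submatrix m c).det ≠ 0 := by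
  let B : Matrix ι ι (PR k n) := of fun i j => if c j ∈ V (m i) then X (m i, c j) else 0
  have hB : (MV k n V).submatrix m c = B.map (algebraMap (PR k n) (FF k n)) := by
    ext i j
    simp [B, MV, apply_ite (algebraMap (PR k n) (FF k n))]
  let p : Fin k × Fin n → ℝ := (Set.range fun j => (m j, c j)).indicator 1
  have hBp : (MvPolynomial.eval p).mapMatrix B = 1 := by
    ext i j
    by_cases hij : i = j
    · subst hij
      simp [B, p, hV i, Set.indicator_of_mem (Set.mem_range_self i)]
    · have hunmatched : (m i, c j) ∉ Set.range fun j => (m j, c j) := by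
        rintro ⟨l, hl⟩
        simp only [Prod.mk.injEq] at hl
        exact hij ((hm hl.1).symm.trans (hc hl.2))
      simp [B, p, hij, apply_ite (MvPolynomial.eval p), Set.indicator_of_notMem hunmatched]
  have hBdet : B.det ≠ 0 := fun h0 => by
    simpa [h0, hBp] using RingHom.map_det (MvPolynomial.eval p) B
  rw [hB, ← RingHom.mapMatrix_apply, ← RingHom.map_det]
  exact (map_ne_zero_iff _ (IsFractionRing.injective (PR k n) (FF k n))).2 hBdet

theorem exists_injective_mem_of_forall_card_le {α κ : Type*} [DecidableEq α] [Fintype κ]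
    {V : κ → Finset α} {S : Finset α}
    (h : ∀ U ⊆ S, U.Nonempty → #U ≤ #{i | (V i ∩ U).Nonempty}) :
    ∃ f : S → κ, Injective f ∧ ∀ j, ↑j ∈ V (f j) := by
  refine (Fintype.all_card_le_filter_rel_iff_exists_injective fun (j : S) i => ↑j ∈ V i).1
    fun A => ?_
  rcases A.eq_empty_or_nonempty with rfl | hA
  · simp
  · have hU := h (A.map (Embedding.subtype _)) (map_subtype_subset A) (hA.map)
    convert hU using 2
    · simp
    · ext i
      simp only [mem_filter, mem_univ, true_and, Finset.Nonempty, mem_inter, mem_map,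
        Embedding.coe_subtype]
      exact ⟨fun ⟨j, hjA, hjV⟩ => ⟨j, hjV, j, hjA, rfl⟩,
        fun ⟨_, hjV, j, hjA, hj⟩ => ⟨j, hjA, hj ▸ hjV⟩⟩

/-- the columns of `M_V` indexed by `S` are linearly independent over `K`
iff every nonempty `U ⊆ S` satisfies `|{i : V_i ∩ U ≠ ∅}| ≥ |U|`. -/
theorem statement1 (k n : ℕ) (V : Fin k → Finset (Fin n)) (S : Finset (Fin n)) :
    ColsIndep (MV k n V) S ↔
      ∀ U ⊆ S, U.Nonempty →
        U.card ≤ (Finset.univ.filter fun i : Fin k => (V i ∩ U).Nonempty).card := by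
  constructor
  · intro hS U hUS _
    simpa using (hS.mono hUS).card_le_card_of_forall_notMem_eq_zero fun j i hi =>
      MV_apply_of_notMem fun hj => hi (mem_filter.2 ⟨mem_univ i, j, mem_inter.2 ⟨hj, j.2⟩⟩)
  · intro hHall
    obtain ⟨f, hf, hfV⟩ := exists_injective_mem_of_forall_card_le hHall
    exact linearIndependent_cols_of_det_submatrix_ne_zero f Subtype.val
      (det_submatrix_MV_ne_zero V hf Subtype.val_injective hfV)
end

section
/- For every admissible Wilson loop diagram W = (𝒫,[n]), the matrix M_{V(𝒫)} has rank |𝒫| over the field K. -/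
/-- `b` lies strictly inside the cyclic interval going (in the increasing cyclic direction)
from `a` to `c` in `ZMod n`. -/
def Inside {n : ℕ} (a b c : ZMod n) : Prop :=
  0 < (b - a).val ∧ (b - a).val < (c - a).val

/-- Two propagators (given as ordered pairs representing unordered pairs) cross:
exactly one endpoint of `q` lies strictly inside each of the two cyclic intervals into
which the endpoints of `p` divide `ZMod n`. -/
def Cross {n : ℕ} (p q : ZMod n × ZMod n) : Prop :=
  (Inside p.1 q.1 p.2 ∧ Inside p.2 q.2 p.1) ∨
    (Inside p.1 q.2 p.2 ∧ Inside p.2 q.1 p.1)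

/-- The support `V_p = {i, i+1, j, j+1}` of a propagator `p = (i,j)`. -/
def propSupp {n : ℕ} (p : ZMod n × ZMod n) : Finset (ZMod n) :=
  {p.1, p.1 + 1, p.2, p.2 + 1}

/-- The support `V_P` of a multiset of propagators. -/
def multiSupp {n : ℕ} (P : Multiset (ZMod n × ZMod n)) : Finset (ZMod n) :=
  (P.map propSupp).sup

/-- A Wilson loop diagram `(Ps, [n])` is admissible: no two propagators cross,
every nonempty subset `P` of the propagators satisfies `|V_P| ≥ |P| + 3`
(local density), and `n ≥ |Ps| + 4` (global density). -/
def Admissible (n : ℕ) (Ps : Multiset (ZMod n × ZMod n)) : Prop :=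
  (∀ p ∈ Ps, ∀ q ∈ Ps, ¬ Cross p q) ∧
  (∀ P : Multiset (ZMod n × ZMod n), P ≤ Ps → P ≠ 0 →
    Multiset.card P + 3 ≤ (multiSupp P).card) ∧
  Multiset.card Ps + 4 ≤ n


open MvPolynomial

/-- The polynomial ring `ℝ[x_{p,v}]` with variables indexed by propagator rows and
vertices of the diagram. -/
abbrev WR (k n : ℕ) : Type := MvPolynomial (Fin k × ZMod n) ℝ

/-- Its field of fractions `K`. -/
abbrev WF (k n : ℕ) : Type := FractionRing (WR k n)

/-- The matrix `M_{V(𝒫)}` of a Wilson loop diagram, with entries in `ℝ[x]`: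
the `(p,v)` entry is `x_{p,v}` if `v ∈ V_p` and `0` otherwise. -/
noncomputable def MWpoly (k n : ℕ) (P : Fin k → ZMod n × ZMod n) :
    Matrix (Fin k) (ZMod n) (WR k n) :=
  Matrix.of fun i v => if v ∈ propSupp (P i) then X (i, v) else 0

/-- The matrix `M_{V(𝒫)}` of a Wilson loop diagram, over the field `K`. -/
noncomputable def MW (k n : ℕ) (P : Fin k → ZMod n × ZMod n) :
    Matrix (Fin k) (ZMod n) (WF k n) :=
  Matrix.of fun i v => algebraMap (WR k n) (WF k n) (MWpoly k n P i v)

/-!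
`M_{V(𝒫)}` is the generic matrix with sparsity pattern `i ↦ V_{P i}`. By Hall's marriage
theorem, local density `|V_P| ≥ |P| + 3` gives each propagator `i` a vertex `f i ∈ V_{P i}`,
with `f` injective. The `k × k` minor on the columns `f` is then a nonzero polynomial: setting
`x_{i,v} = 1` when `v = f i` and `0` otherwise specializes it to `det 1 = 1`.
-/

namespace Matrix

variable {ι κ K : Type*} [Fintype ι] [DecidableEq ι] [Fintype κ] [Field K]

theorem rank_eq_card_height_of_det_submatrix_ne_zero (A : Matrix ι κ K) (f : ι → κ)
    (hf : (A.submatrix id f).det ≠ 0) : A.rank = Fintype.card ι := by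
  have hsub : (A.submatrix id f).rank = Fintype.card ι :=
    rank_of_isUnit _ ((isUnit_iff_isUnit_det _).mpr hf.isUnit)
  exact (rank_le_card_height A).antisymm (hsub ▸ rank_submatrix_le A id f)

end Matrix

section GenericMatrix

variable {ι κ R : Type*} [DecidableEq κ] [CommRing R]

noncomputable def genericMatrix (S : ι → Finset κ) : Matrix ι κ (MvPolynomial (ι × κ) R) :=
  Matrix.of fun i v => if v ∈ S i then X (i, v) else 0

variable [DecidableEq ι] {S : ι → Finset κ} {f : ι → κ}

theorem map_eval_genericMatrix_submatrix (hf : Function.Injective f) (hfS : ∀ i, f i ∈ S i) :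
    ((genericMatrix S).submatrix id f).map
      (eval fun q : ι × κ => if q.2 = f q.1 then (1 : R) else 0) = 1 := by
  ext i j
  by_cases hij : i = j
  · subst hij
    simp [genericMatrix, hfS i]
  · have hfij : f j ≠ f i := fun h => hij (hf h).symm
    simp only [genericMatrix, Matrix.map_apply, Matrix.submatrix_apply, Matrix.of_apply, id_eq,
      Matrix.one_apply_ne hij]
    split_ifs <;> simp [hfij]

theorem det_genericMatrix_submatrix_ne_zero [Fintype ι] [Nontrivial R]
    (hf : Function.Injective f) (hfS : ∀ i, f i ∈ S i) :
    ((genericMatrix (R := R) S).submatrix id f).det ≠ 0 := by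
  intro h
  have := congrArg (eval fun q : ι × κ => if q.2 = f q.1 then (1 : R) else 0) h
  rw [RingHom.map_det, RingHom.mapMatrix_apply, map_eval_genericMatrix_submatrix hf hfS,
    Matrix.det_one, map_zero] at this
  exact one_ne_zero this

theorem rank_map_genericMatrix_fractionRing [Fintype ι] [Fintype κ] [IsDomain R]
    (hf : Function.Injective f) (hfS : ∀ i, f i ∈ S i) :
    ((genericMatrix (R := R) S).map
      (algebraMap _ (FractionRing (MvPolynomial (ι × κ) R)))).rank = Fintype.card ι := by
  refine Matrix.rank_eq_card_height_of_det_submatrix_ne_zero _ f ?_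
  rw [Matrix.submatrix_map, ← RingHom.mapMatrix_apply, ← RingHom.map_det]
  exact (IsFractionRing.injective _ _).ne_iff' (map_zero _) |>.mpr
    (det_genericMatrix_submatrix_ne_zero hf hfS)

end GenericMatrix

theorem multiSupp_map {ι : Type*} {n : ℕ} (P : ι → ZMod n × ZMod n) (s : Finset ι) :
    multiSupp (s.val.map P) = s.biUnion fun i => propSupp (P i) := by
  classical
  rw [multiSupp, Multiset.map_map, ← Finset.sup_def, Finset.sup_eq_biUnion]
  rfl

theorem exists_injective_mem_propSupp {ι : Type*} [Fintype ι] {n : ℕ}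
    (P : ι → ZMod n × ZMod n)
    (hdense : ∀ Q : Multiset (ZMod n × ZMod n), Q ≤ Finset.univ.val.map P → Q ≠ 0 →
      Multiset.card Q + 3 ≤ (multiSupp Q).card) :
    ∃ f : ι → ZMod n, Function.Injective f ∧ ∀ i, f i ∈ propSupp (P i) := by
  classical
  rw [← Finset.all_card_le_biUnion_card_iff_exists_injective]
  intro s
  rcases s.eq_empty_or_nonempty with rfl | hs
  · simp
  have hQ := hdense (s.val.map P)
    (Multiset.map_le_map (Finset.val_le_iff.mpr s.subset_univ)) (by simpa using hs.ne_empty)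
  rw [multiSupp_map, Multiset.card_map, Finset.card_val] at hQ
  omega

theorem MW_eq_map_genericMatrix (k n : ℕ) (P : Fin k → ZMod n × ZMod n) :
    MW k n P = (genericMatrix fun i => propSupp (P i)).map (algebraMap (WR k n) (WF k n)) :=
  rfl

/-- for an admissible Wilson loop diagram, the matrix `M_{V(𝒫)}` has
rank `|𝒫|` over `K`. -/
theorem statement4 (k n : ℕ) [NeZero n] (P : Fin k → ZMod n × ZMod n)
    (hW : Admissible n (Multiset.map P Finset.univ.val)) :
    (MW k n P).rank = k := by
  obtain ⟨f, hf, hfS⟩ := exists_injective_mem_propSupp P hW.2.1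
  rw [MW_eq_map_genericMatrix, rank_map_genericMatrix_fractionRing hf hfS, Fintype.card_fin]
end

section
/- Let M be a matroid with at least one base on a finite ground set E equipped with a linear order, and let all bases have size r. Order r-element subsets by Gale dominance: B ≤ B' if and only if for every i, the i-th smallest element of B is less than or equal to the i-th smallest element of B'. Then the set of bases of M has a unique minimum and a unique maximum with respect to this Gale order. -/
/-!
Scanning the ground set upwards and extending, at each new element, a basis of the initial
segment below it, one obtains a base `B` such that `B ∩ Iic v` is a basis of `Iic v` for every
`v`. Any other base `B'` meets `Iic v` in an independent set, so in at most as many elements as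
`B` does; and this counting condition is exactly `B ≤ B'` in the Gale order, since the `i`-th
smallest element of a set is `≤ v` iff the set has more than `i` elements `≤ v`. Uniqueness is
antisymmetry of the Gale order. The maximum is the minimum for the reversed order on the ground
set, which reverses the Gale order.
-/

/-- The Gale (dominance) order on `r`-element finite subsets of a linearly ordered
type: `B ≤ B'` iff for every `i`, the `i`-th smallest element of `B` is at most the
`i`-th smallest element of `B'`. -/
def GaleLE {α : Type*} [LinearOrder α] (r : ℕ) (B B' : Finset α) : Prop :=
  ∃ (h : B.card = r) (h' : B'.card = r),
    ∀ i : Fin r, (B.orderIsoOfFin h i : α) ≤ (B'.orderIsoOfFin h' i : α)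

open scoped Finset

namespace Finset

variable {α : Type*} [LinearOrder α] {s : Finset α} {k : ℕ}

theorem card_filter_lt_orderEmbOfFin (h : #s = k) (i : Fin k) :
    #(s.filter (· < s.orderEmbOfFin h i)) = i := by
  have : s.filter (· < s.orderEmbOfFin h i) = (Iio i).map (s.orderEmbOfFin h).toEmbedding := by
    ext x
    simp only [mem_filter, mem_map, mem_Iio, RelEmbedding.coe_toEmbedding]
    constructor
    · rintro ⟨hx, hlt⟩
      obtain ⟨j, rfl⟩ : x ∈ Set.range (s.orderEmbOfFin h) := by rwa [range_orderEmbOfFin]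
      exact ⟨j, (s.orderEmbOfFin h).lt_iff_lt.1 hlt, rfl⟩
    · rintro ⟨j, hj, rfl⟩
      exact ⟨orderEmbOfFin_mem s h j, (s.orderEmbOfFin h).lt_iff_lt.2 hj⟩
  rw [this, card_map, Fin.card_Iio]

theorem orderEmbOfFin_le_iff_lt_card_filter_le (h : #s = k) (i : Fin k) (v : α) :
    s.orderEmbOfFin h i ≤ v ↔ (i : ℕ) < #(s.filter (· ≤ v)) := by
  rw [← card_filter_lt_orderEmbOfFin h i]
  constructor
  · intro hv
    refine card_lt_card <| (ssubset_iff_of_subset ?_).2 ⟨s.orderEmbOfFin h i, ?_, ?_⟩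
    · exact monotone_filter_right s fun _ _ hx ↦ hx.le.trans hv
    · exact mem_filter.2 ⟨orderEmbOfFin_mem s h i, hv⟩
    · exact fun hx ↦ (mem_filter.1 hx).2.false
  · intro hi
    by_contra! hv
    exact hi.not_ge <| card_le_card <| monotone_filter_right s fun _ _ hx ↦ hx.trans_lt hv

end Finset

section GaleLE

open Finset

variable {α : Type*} [LinearOrder α] {r : ℕ}

theorem galeLE_of_forall_card_filter_le {s t : Finset α} (hs : #s = r) (ht : #t = r)
    (h : ∀ v, #(t.filter (· ≤ v)) ≤ #(s.filter (· ≤ v))) : GaleLE r s t := by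
  refine ⟨hs, ht, fun i ↦ ?_⟩
  simp only [coe_orderIsoOfFin_apply, orderEmbOfFin_le_iff_lt_card_filter_le]
  exact ((orderEmbOfFin_le_iff_lt_card_filter_le ht i _).1 le_rfl).trans_le (h _)

theorem GaleLE.antisymm {s t : Finset α} (hst : GaleLE r s t) (hts : GaleLE r t s) : s = t := by
  obtain ⟨hs, ht, hle⟩ := hst
  obtain ⟨_, _, hge⟩ := hts
  have : s.orderEmbOfFin hs = t.orderEmbOfFin ht := by
    ext i
    exact (hle i).antisymm (hge i)
  rw [← coe_inj, ← range_orderEmbOfFin s hs, ← range_orderEmbOfFin t ht, this]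

theorem coe_orderIsoOfFin_orderDual {s : Finset αᵒᵈ} (h : #s = r) (i : Fin r) :
    (s.orderIsoOfFin h i : αᵒᵈ) = OrderDual.toDual (orderIsoOfFin (α := α) s h i.rev : α) := by
  refine congrFun (orderEmbOfFin_unique h (fun _ ↦ orderEmbOfFin_mem (α := α) s h _) ?_).symm i
  exact fun a b hab ↦ (orderEmbOfFin (α := α) s h).strictMono (Fin.rev_lt_rev.2 hab)

-- `Finset α` and `Finset αᵒᵈ` are only definitionally equal, which defeats `rw` here.
theorem galeLE_orderDual_iff {s t : Finset αᵒᵈ} : GaleLE r s t ↔ GaleLE (α := α) r t s := by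
  constructor
  · rintro ⟨hs, ht, hle⟩
    refine ⟨ht, hs, fun i ↦ ?_⟩
    have := (coe_orderIsoOfFin_orderDual (α := α) hs i.rev).symm.trans_le
      ((hle i.rev).trans_eq (coe_orderIsoOfFin_orderDual (α := α) ht i.rev))
    rwa [Fin.rev_rev, OrderDual.toDual_le_toDual] at this
  · rintro ⟨ht, hs, hle⟩
    refine ⟨hs, ht, fun i ↦ ?_⟩
    exact (coe_orderIsoOfFin_orderDual (α := α) hs i).trans_le
      ((OrderDual.toDual_le_toDual.2 (hle i.rev)).trans_eq
        (coe_orderIsoOfFin_orderDual (α := α) ht i).symm)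

end GaleLE

namespace Matroid

open Set

variable {α : Type*} {M : Matroid α}

theorem Indep.card_le_card_of_isBasis' {I J : Finset α} {X : Set α} (hJ : M.Indep J)
    (hJX : ↑J ⊆ X) (hI : M.IsBasis' I X) : #J ≤ #I := by
  have := (hJ.encard_le_eRk_of_subset hJX).trans_eq hI.encard_eq_eRk.symm
  simpa [encard_coe_eq_coe_finsetCard] using this

variable [LinearOrder α] (M)

theorem exists_isBasis'_forall_inter_Iic (s : Finset α) :
    ∃ I, M.IsBasis' I s ∧ ∀ v, M.IsBasis' (I ∩ Iic v) (s ∩ Iic v) := by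
  induction s using Finset.induction_on_max with
  | empty => exact ⟨∅, by simpa using M.empty_indep.isBasis_self.isBasis',
    fun _ ↦ by simpa using M.empty_indep.isBasis_self.isBasis'⟩
  | insert a s has ih =>
    obtain ⟨I, hI, hIv⟩ := ih
    obtain ⟨J, hJ, hIJ⟩ := hI.indep.subset_isBasis'_of_subset
      (hI.subset.trans (subset_insert a (s : Set α)))
    rw [Finset.coe_insert]
    have hJs : J ∩ s = I := subset_antisymm
      (fun e he ↦ hI.mem_of_insert_indep he.2 (hJ.indep.subset (insert_subset he.1 hIJ)))
      (subset_inter hIJ hI.subset)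
    refine ⟨J, hJ, fun v ↦ ?_⟩
    rcases lt_or_ge v a with hva | hav
    · have hs : insert a (s : Set α) ∩ Iic v = (s : Set α) ∩ Iic v :=
        insert_inter_of_notMem (notMem_Iic.2 hva)
      have hJv : J ∩ Iic v = I ∩ Iic v := by
        rw [← hJs, inter_assoc, ← hs, ← inter_assoc, inter_eq_left.2 hJ.subset]
      rw [hs, hJv]
      exact hIv v
    · have hs : insert a (s : Set α) ⊆ Iic v :=
        insert_subset hav fun x hx ↦ (has x hx).le.trans hav
      rwa [inter_eq_left.2 hs, inter_eq_left.2 (hJ.subset.trans hs)]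

theorem exists_isBase_forall_isBasis'_inter_Iic [Fintype α] :
    ∃ B, M.IsBase B ∧ ∀ v, M.IsBasis' (B ∩ Iic v) (Iic v) := by
  obtain ⟨B, hB, hBv⟩ := M.exists_isBasis'_forall_inter_Iic Finset.univ
  rw [Finset.coe_univ] at hB hBv
  refine ⟨B, ?_, by simpa using hBv⟩
  rwa [isBasis'_iff_isBasis_inter_ground, univ_inter, isBasis_ground_iff] at hB

variable {M}

theorem existsUnique_isBase_forall_galeLE [Fintype α] {r : ℕ}
    (hr : ∀ B, M.IsBase B → B.ncard = r) :
    ∃! B : Finset α, M.IsBase ↑B ∧ ∀ B' : Finset α, M.IsBase ↑B' → GaleLE r B B' := by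
  have hcard (B : Finset α) (hB : M.IsBase ↑B) : #B = r := by simpa using hr _ hB
  have coe_filter_le (B : Finset α) (v : α) : ↑(B.filter (· ≤ v)) = (B : Set α) ∩ Iic v := by
    ext; simp
  obtain ⟨B, hB, hBv⟩ := M.exists_isBase_forall_isBasis'_inter_Iic
  lift B to Finset α using hB.finite
  have hmin (B' : Finset α) (hB' : M.IsBase ↑B') : GaleLE r B B' := by
    refine galeLE_of_forall_card_filter_le (hcard B hB) (hcard B' hB') fun v ↦ ?_
    have hB'v : M.Indep ↑(B'.filter (· ≤ v)) := coe_filter_le B' v ▸ hB'.indep.inter_right _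
    exact hB'v.card_le_card_of_isBasis' (coe_filter_le B' v ▸ inter_subset_right)
      (coe_filter_le B v ▸ hBv v)
  exact ⟨B, ⟨hB, hmin⟩, fun B' ⟨hB', hB'min⟩ ↦ (hB'min B hB).antisymm (hmin B' hB')⟩

end Matroid

theorem statement5_general {α : Type*} [Fintype α] [LinearOrder α] (M : Matroid α) (r : ℕ)
    (hr : ∀ B, M.IsBase B → B.ncard = r) :
    (∃! B : Finset α, M.IsBase ↑B ∧ ∀ B' : Finset α, M.IsBase ↑B' → GaleLE r B B') ∧
    (∃! B : Finset α, M.IsBase ↑B ∧ ∀ B' : Finset α, M.IsBase ↑B' → GaleLE r B' B) := by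
  refine ⟨M.existsUnique_isBase_forall_galeLE hr, ?_⟩
  have hmax := Matroid.existsUnique_isBase_forall_galeLE (α := αᵒᵈ) (M := M) hr
  simp only [galeLE_orderDual_iff] at hmax
  exact hmax

/-- a matroid on a finite linearly ordered ground set whose bases all
have size `r` has a unique Gale-minimum base and a unique Gale-maximum base. -/
theorem statement5 {α : Type*} [Fintype α] [LinearOrder α] (M : Matroid α) (r : ℕ)
    (hex : ∃ B, M.IsBase B) (hr : ∀ B, M.IsBase B → B.ncard = r) :
    (∃! B : Finset α, M.IsBase ↑B ∧ ∀ B' : Finset α, M.IsBase ↑B' → GaleLE r B B') ∧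
    (∃! B : Finset α, M.IsBase ↑B ∧ ∀ B' : Finset α, M.IsBase ↑B' → GaleLE r B' B) :=
  statement5_general M r hr
end

section
/- Let W = (𝒫,[n]) be an admissible Wilson loop diagram, and let p = (i,j) ∈ 𝒫 with j ∉ {i−2, i−1, i, i+1, i+2} in ℤ/nℤ. Suppose that (i+1,j) ∉ 𝒫 and that every propagator of 𝒫 of the form (i,m) with m ≠ j has m not strictly inside the cyclic interval from i+1 to j that does not contain i (this encodes that x_{p,i} is a factor of R(V(𝒫)), i.e., p is the propagator incident to edge i farthest from vertex i). Then the Wilson loop diagram W' = ((𝒫 ∖ {p}) ∪ {(i+1,j)}, [n]) is admissible. -/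
section WilsonLoop

variable {n : ℕ}

def NonCrossing (Ps : Multiset (ZMod n × ZMod n)) : Prop :=
  ∀ p ∈ Ps, ∀ q ∈ Ps, ¬ Cross p q

def LocallyDense (Ps : Multiset (ZMod n × ZMod n)) : Prop :=
  ∀ P : Multiset (ZMod n × ZMod n), P ≤ Ps → P ≠ 0 → Multiset.card P + 3 ≤ (multiSupp P).card

/-- `[lowPos i q, highPos i q]` is the propagator `q` read as an interval of positions
`(x - i).val` on the circle cut open at `i`. -/
def lowPos (i : ZMod n) (q : ZMod n × ZMod n) : ℕ := min (q.1 - i).val (q.2 - i).val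

def highPos (i : ZMod n) (q : ZMod n × ZMod n) : ℕ := max (q.1 - i).val (q.2 - i).val

theorem val_sub_eq_zero_iff {i x : ZMod n} : (x - i).val = 0 ↔ x = i := by
  rw [ZMod.val_eq_zero, sub_eq_zero]

theorem val_add_one_sub_self (hn : n ≠ 1) (i : ZMod n) : (i + 1 - i).val = 1 := by
  rw [add_sub_cancel_left, ZMod.val_one'' hn]

theorem multiSupp_cons (p : ZMod n × ZMod n) (Q : Multiset (ZMod n × ZMod n)) :
    multiSupp (p ::ₘ Q) = propSupp p ∪ multiSupp Q := by
  simp [multiSupp]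

theorem mem_multiSupp {x : ZMod n} {Q : Multiset (ZMod n × ZMod n)} :
    x ∈ multiSupp Q ↔ ∃ q ∈ Q, x ∈ propSupp q := by
  induction Q using Multiset.induction with
  | empty => simp [multiSupp]
  | cons p Q ih => simp [multiSupp_cons, ih]

theorem multiSupp_add (P Q : Multiset (ZMod n × ZMod n)) :
    multiSupp (P + Q) = multiSupp P ∪ multiSupp Q := by
  simp [multiSupp]

theorem lowPos_highPos_add_one {i j : ZMod n} (hn : n ≠ 1) (hd : 1 ≤ (j - i).val) :
    lowPos i (i + 1, j) = 1 ∧ highPos i (i + 1, j) = (j - i).val := by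
  simp only [lowPos, highPos, val_add_one_sub_self hn]
  omega

variable [NeZero n]

theorem val_sub_add_val_sub (i a b : ZMod n) :
    (a - i).val + (b - a).val = (b - i).val ∨
      (a - i).val + (b - a).val = (b - i).val + n := by
  have h := ZMod.val_add (a - i) (b - a)
  rw [add_comm, sub_add_sub_cancel] at h
  have := ZMod.val_lt (a - i)
  have := ZMod.val_lt (b - a)
  rcases Nat.lt_or_ge ((a - i).val + (b - a).val) n with hlt | hge
  · rw [Nat.mod_eq_of_lt hlt] at h
    omega
  · rw [Nat.mod_eq_sub_mod hge, Nat.mod_eq_of_lt (by omega)] at h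
    omega

theorem inside_iff_val_sub (i a b c : ZMod n) :
    Inside a b c ↔
      (a - i).val < (b - i).val ∧ (b - i).val < (c - i).val ∨
      (c - i).val < (a - i).val ∧ (a - i).val < (b - i).val ∨
      (b - i).val < (c - i).val ∧ (c - i).val < (a - i).val := by
  have := val_sub_add_val_sub i a b
  have := val_sub_add_val_sub i a c
  have := ZMod.val_lt (a - i)
  have := ZMod.val_lt (b - i)
  have := ZMod.val_lt (c - i)
  have := ZMod.val_lt (b - a)
  have := ZMod.val_lt (c - a)
  unfold Inside
  omega

theorem eq_of_val_sub_eq {i x y : ZMod n} (h : (x - i).val = (y - i).val) : x = y :=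
  sub_left_injective (ZMod.val_injective n h)

theorem eq_add_of_val_sub_eq {i x : ZMod n} {k : ℕ} (h : (x - i).val = k) : x = i + k := by
  rw [← h, ZMod.natCast_zmod_val, add_sub_cancel]

theorem val_add_one_sub (hn : n ≠ 1) {i x : ZMod n} (h : (x - i).val + 1 ≠ n) :
    (x + 1 - i).val = (x - i).val + 1 := by
  have := ZMod.val_lt (x - i)
  rw [add_sub_right_comm, ZMod.val_add, ZMod.val_one'' hn, Nat.mod_eq_of_lt (by omega)]

theorem add_one_eq_of_val_sub_add_one_eq {i x : ZMod n} (h : (x - i).val + 1 = n) : x + 1 = i := by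
  have hx := eq_add_of_val_sub_eq (i := i) (x := x) rfl
  rw [hx, show (x - i).val = n - 1 by omega, Nat.cast_sub (NeZero.one_le), ZMod.natCast_self]
  ring

theorem three_le_val_sub {i j : ZMod n} (h3 : j ≠ i) (h4 : j ≠ i + 1) (h5 : j ≠ i + 2) :
    3 ≤ (j - i).val := by
  by_contra! h
  obtain h | h | h : (j - i).val = 0 ∨ (j - i).val = 1 ∨ (j - i).val = 2 := by omega
  · exact h3 (by simpa using eq_add_of_val_sub_eq h)
  · exact h4 (by simpa using eq_add_of_val_sub_eq h)
  · exact h5 (by simpa using eq_add_of_val_sub_eq h)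

theorem val_sub_add_two_le {i j : ZMod n} (h2 : j ≠ i - 1) : (j - i).val + 2 ≤ n := by
  have := ZMod.val_lt (j - i)
  by_contra! h
  exact h2 (eq_sub_of_add_eq (add_one_eq_of_val_sub_add_one_eq (by omega)))

theorem cross_iff_interleave (i : ZMod n) (p q : ZMod n × ZMod n) :
    Cross p q ↔
      lowPos i p < lowPos i q ∧ lowPos i q < highPos i p ∧ highPos i p < highPos i q ∨
      lowPos i q < lowPos i p ∧ lowPos i p < highPos i q ∧ highPos i q < highPos i p := by
  simp only [Cross, inside_iff_val_sub i, lowPos, highPos]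
  omega

theorem cross_comm (p q : ZMod n × ZMod n) : Cross p q ↔ Cross q p := by
  rw [cross_iff_interleave 0, cross_iff_interleave 0]
  tauto

theorem eq_or_eq_swap_of_lowPos_highPos {i : ZMod n} {p q : ZMod n × ZMod n}
    (hlow : lowPos i q = lowPos i p) (hhigh : highPos i q = highPos i p) :
    q = p ∨ q = p.swap := by
  simp only [lowPos, highPos] at hlow hhigh
  have : (q.1 - i).val = (p.1 - i).val ∧ (q.2 - i).val = (p.2 - i).val ∨
      (q.1 - i).val = (p.2 - i).val ∧ (q.2 - i).val = (p.1 - i).val := by omega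
  rcases this with ⟨h1, h2⟩ | ⟨h1, h2⟩
  · exact Or.inl (Prod.ext (eq_of_val_sub_eq h1) (eq_of_val_sub_eq h2))
  · exact Or.inr (Prod.ext (eq_of_val_sub_eq h1) (eq_of_val_sub_eq h2))

theorem one_le_lowPos_of_notMem_propSupp {i : ZMod n} {q : ZMod n × ZMod n}
    (h : i ∉ propSupp q) : 1 ≤ lowPos i q ∧ highPos i q + 2 ≤ n := by
  simp only [propSupp, Finset.mem_insert, Finset.mem_singleton, not_or] at h
  obtain ⟨h1, h1', h2, h2'⟩ := h
  have := ZMod.val_lt (q.1 - i)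
  have := ZMod.val_lt (q.2 - i)
  have e1 : (q.1 - i).val ≠ 0 := fun e => h1 (val_sub_eq_zero_iff.mp e).symm
  have e2 : (q.2 - i).val ≠ 0 := fun e => h2 (val_sub_eq_zero_iff.mp e).symm
  have e1' : (q.1 - i).val + 1 ≠ n := fun e => h1' (add_one_eq_of_val_sub_add_one_eq e).symm
  have e2' : (q.2 - i).val + 1 ≠ n := fun e => h2' (add_one_eq_of_val_sub_add_one_eq e).symm
  simp only [lowPos, highPos]
  omega

theorem val_sub_mem_of_mem_multiSupp {i : ZMod n} {Q : Multiset (ZMod n × ZMod n)} {lo hi : ℕ}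
    (hhi : hi + 2 ≤ n) (hQ : ∀ q ∈ Q, lo ≤ lowPos i q ∧ highPos i q ≤ hi) {x : ZMod n}
    (hx : x ∈ multiSupp Q) : lo ≤ (x - i).val ∧ (x - i).val ≤ hi + 1 := by
  obtain ⟨q, hq, hxq⟩ := mem_multiSupp.mp hx
  have hlo := (hQ q hq).1
  have hhi' := (hQ q hq).2
  simp only [lowPos, highPos] at hlo hhi'
  have h1 := val_add_one_sub (i := i) (x := q.1) (by omega) (by omega)
  have h2 := val_add_one_sub (i := i) (x := q.2) (by omega) (by omega)
  simp only [propSupp, Finset.mem_insert, Finset.mem_singleton] at hxq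
  rcases hxq with rfl | rfl | rfl | rfl <;> omega

theorem add_four_le_card_union (i : ZMod n) (m : ℕ) {X Y : Finset (ZMod n)} {k l : ℕ}
    (hX : ∀ x ∈ X, (x - i).val ≤ m + 1) (hY : ∀ y ∈ Y, m ≤ (y - i).val)
    (hXk : k + 3 ≤ X.card) (hYl : l + 3 ≤ Y.card) : k + l + 4 ≤ (X ∪ Y).card := by
  have hXY : (X ∩ Y).card ≤ (Finset.Icc m (m + 1)).card := by
    refine Finset.card_le_card_of_injOn (fun x => (x - i).val) ?_ ?_
    · intro x hx
      have hx := Finset.mem_inter.mp hx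
      simp only [Finset.coe_Icc, Set.mem_Icc]
      exact ⟨hY x hx.2, hX x hx.1⟩
    · exact fun x _ y _ h => eq_of_val_sub_eq h
  have := Finset.card_union_add_card_inter X Y
  simp only [Nat.card_Icc] at hXY
  omega

theorem card_propSupp_add_one {i j : ZMod n} (hd3 : 3 ≤ (j - i).val)
    (hdn : (j - i).val + 2 ≤ n) : (propSupp (i + 1, j)).card = 4 := by
  have p1 := val_add_one_sub_self (by omega) i
  have p2 := val_add_one_sub (i := i) (x := i + 1) (by omega) (by omega)
  have p4 := val_add_one_sub (i := i) (x := j) (by omega) (by omega)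
  have hne : ∀ x y : ZMod n, (x - i).val ≠ (y - i).val → x ≠ y := fun x y h e => h (e ▸ rfl)
  simp only [propSupp]
  rw [Finset.card_insert_of_notMem, Finset.card_insert_of_notMem, Finset.card_pair]
  · exact hne _ _ (by omega)
  · simp only [Finset.mem_insert, Finset.mem_singleton, not_or]
    exact ⟨hne _ _ (by omega), hne _ _ (by omega)⟩
  · simp only [Finset.mem_insert, Finset.mem_singleton, not_or]
    exact ⟨hne _ _ (by omega), hne _ _ (by omega), hne _ _ (by omega)⟩

theorem add_four_le_card_multiSupp_of_split {Ps Q : Multiset (ZMod n × ZMod n)}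
    (hNC : NonCrossing Ps) (hDen : LocallyDense Ps)
    (hQ : Q ≤ Ps) {i : ZMod n} {d : ℕ} (hdn : d + 2 ≤ n)
    (hQd : ∀ q ∈ Q, 1 ≤ lowPos i q ∧ highPos i q ≤ d)
    (hleft : ∃ q ∈ Q, lowPos i q = 1) (hright : ∃ q ∈ Q, highPos i q = d)
    (hspan : ∀ q ∈ Q, lowPos i q = 1 → highPos i q < d) :
    Multiset.card Q + 4 ≤ (multiSupp Q).card := by
  obtain ⟨q₀, hq₀, hmax⟩ := Multiset.exists_max_image (highPos i)
    (s := Q.filter (lowPos i · = 1)) (by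
      obtain ⟨q, hq, hq1⟩ := hleft
      exact fun h => Multiset.notMem_zero q (h ▸ Multiset.mem_filter.mpr ⟨hq, hq1⟩))
  obtain ⟨hq₀Q, hq₀1⟩ := Multiset.mem_filter.mp hq₀
  set m := highPos i q₀
  have hmd : m < d := hspan q₀ hq₀Q hq₀1
  set A := Q.filter (highPos i · ≤ m)
  set B := Q.filter (fun q => ¬ highPos i q ≤ m)
  -- a propagator reaching past `m` from inside `(1, m)` would cross `q₀`
  have hB : ∀ q ∈ B, m ≤ lowPos i q ∧ highPos i q ≤ d := by
    intro q hq
    obtain ⟨hqQ, hqm⟩ := Multiset.mem_filter.mp hq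
    refine ⟨?_, (hQd q hqQ).2⟩
    by_contra! hlow
    have hlow1 : lowPos i q ≠ 1 := fun h1 =>
      hqm (hmax q (Multiset.mem_filter.mpr ⟨hqQ, h1⟩))
    apply hNC q₀ (Multiset.mem_of_le hQ hq₀Q) q (Multiset.mem_of_le hQ hqQ)
    rw [cross_iff_interleave i]
    have := hQd q hqQ
    omega
  have hA0 : A ≠ 0 := fun h =>
    Multiset.notMem_zero q₀ (h ▸ Multiset.mem_filter.mpr ⟨hq₀Q, le_refl m⟩)
  have hB0 : B ≠ 0 := by
    obtain ⟨q₁, hq₁, hq₁d⟩ := hright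
    exact fun h => Multiset.notMem_zero q₁ (h ▸ Multiset.mem_filter.mpr ⟨hq₁, by omega⟩)
  have hAB : A + B = Q := Multiset.filter_add_not _ Q
  have hAQ : A ≤ Q := Multiset.filter_le _ Q
  have hBQ : B ≤ Q := Multiset.filter_le _ Q
  rw [← hAB, Multiset.card_add, multiSupp_add]
  refine add_four_le_card_union i m ?_ ?_ (hDen A (hAQ.trans hQ) hA0) (hDen B (hBQ.trans hQ) hB0)
  · refine fun x hx => (val_sub_mem_of_mem_multiSupp (lo := 1) (by omega) ?_ hx).2
    exact fun q hq => ⟨(hQd q (Multiset.mem_of_le hAQ hq)).1, (Multiset.mem_filter.mp hq).2⟩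
  · exact fun x hx => (val_sub_mem_of_mem_multiSupp (by omega) hB hx).1

theorem add_four_le_card_multiSupp_cons_of_nested {Ps Q : Multiset (ZMod n × ZMod n)}
    (hNC : NonCrossing Ps) (hDen : LocallyDense Ps)
    (hQ : Q ≤ Ps) (hQ0 : Q ≠ 0) {i j : ZMod n} (hdn : (j - i).val + 2 ≤ n)
    (hQd : ∀ q ∈ Q, 1 ≤ lowPos i q ∧ highPos i q ≤ (j - i).val)
    (hspan : ∀ q ∈ Q, lowPos i q = 1 → highPos i q < (j - i).val) :
    Multiset.card Q + 4 ≤ (multiSupp ((i + 1, j) ::ₘ Q)).card := by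
  rw [multiSupp_cons]
  have hfresh : ∀ x ∈ propSupp (i + 1, j), x ∉ multiSupp Q →
      Multiset.card Q + 4 ≤ (propSupp (i + 1, j) ∪ multiSupp Q).card := by
    intro x hx hxQ
    have := hDen Q hQ hQ0
    have := Finset.card_lt_card ((Finset.ssubset_iff_of_subset Finset.subset_union_right).mpr
      ⟨x, Finset.mem_union_left _ hx, hxQ⟩)
    omega
  by_cases hleft : ∃ q ∈ Q, lowPos i q = 1
  · by_cases hright : ∃ q ∈ Q, highPos i q = (j - i).val
    · exact (add_four_le_card_multiSupp_of_split hNC hDen hQ hdn hQd hleft hright hspan).trans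
        (Finset.card_le_card Finset.subset_union_right)
    · push Not at hright
      obtain ⟨q, hq, -⟩ := hleft
      have := hright q hq
      have := hQd q hq
      refine hfresh (j + 1) (by simp [propSupp]) fun hx => ?_
      have hQd' : ∀ q ∈ Q, 1 ≤ lowPos i q ∧ highPos i q ≤ (j - i).val - 1 := fun q hq => by
        have := hQd q hq
        have := hright q hq
        omega
      have := (val_sub_mem_of_mem_multiSupp (hi := (j - i).val - 1) (by omega) hQd' hx).2
      have := val_add_one_sub (i := i) (x := j) (by omega) (by omega)
      omega
  · push Not at hleft
    refine hfresh (i + 1) (by simp [propSupp]) fun hx => ?_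
    have hQd' : ∀ q ∈ Q, 2 ≤ lowPos i q ∧ highPos i q ≤ (j - i).val := fun q hq => by
      have := hQd q hq
      have := hleft q hq
      omega
    have := (val_sub_mem_of_mem_multiSupp hdn hQd' hx).1
    have := val_add_one_sub_self (by omega) i
    omega

theorem highPos_lt_of_lowPos_eq_one {Ps Q : Multiset (ZMod n × ZMod n)} {i j : ZMod n}
    (hnew : (i + 1, j) ∉ Ps ∧ (j, i + 1) ∉ Ps) (hn : n ≠ 1) (hd : 1 ≤ (j - i).val) (hQ : Q ≤ Ps)
    (hQd : ∀ q ∈ Q, highPos i q ≤ (j - i).val) :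
    ∀ q ∈ Q, lowPos i q = 1 → highPos i q < (j - i).val := by
  intro q hq hlow
  obtain ⟨hlow₁, hhigh₁⟩ := lowPos_highPos_add_one (i := i) (j := j) hn hd
  refine lt_of_le_of_ne (hQd q hq) fun hhigh => ?_
  have hqPs := Multiset.mem_of_le hQ hq
  rcases eq_or_eq_swap_of_lowPos_highPos (hlow.trans hlow₁.symm) (hhigh.trans hhigh₁.symm)
    with rfl | rfl
  exacts [hnew.1 hqPs, hnew.2 hqPs]

theorem add_three_le_card_multiSupp_cons_add_one {Ps Q : Multiset (ZMod n × ZMod n)}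
    (hDen : LocallyDense Ps) (hQ : Q ≤ Ps) {i j : ZMod n} (hd3 : 3 ≤ (j - i).val)
    (hdn : (j - i).val + 2 ≤ n) :
    Multiset.card Q + 3 ≤ (multiSupp ((i + 1, j) ::ₘ Q)).card := by
  rw [multiSupp_cons]
  by_cases hQ0 : Q = 0
  · rw [hQ0, Multiset.card_zero]
    have := card_propSupp_add_one hd3 hdn
    have := Finset.card_le_card
      (Finset.subset_union_left (s₁ := propSupp (i + 1, j)) (s₂ := multiSupp 0))
    omega
  · exact (hDen Q hQ hQ0).trans (Finset.card_le_card Finset.subset_union_right)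

theorem add_four_le_card_multiSupp_cons_of_notMem {Ps Q : Multiset (ZMod n × ZMod n)}
    (hNC : NonCrossing Ps) (hDen : LocallyDense Ps)
    {i j : ZMod n} (hp : (i, j) ∈ Ps) (hnew : (i + 1, j) ∉ Ps ∧ (j, i + 1) ∉ Ps)
    (hd3 : 3 ≤ (j - i).val) (hdn : (j - i).val + 2 ≤ n)
    (hQ : Q ≤ Ps) (hQ0 : Q ≠ 0) (hi : i ∉ multiSupp Q) :
    Multiset.card Q + 4 ≤ (multiSupp ((i + 1, j) ::ₘ Q)).card := by
  have hpos : ∀ q ∈ Q, 1 ≤ lowPos i q ∧ highPos i q + 2 ≤ n := fun q hq =>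
    one_le_lowPos_of_notMem_propSupp fun h => hi (mem_multiSupp.mpr ⟨q, hq, h⟩)
  have hside : ∀ q ∈ Q, highPos i q ≤ (j - i).val ∨ (j - i).val ≤ lowPos i q := by
    intro q hq
    have hcross := hNC (i, j) hp q (Multiset.mem_of_le hQ hq)
    rw [cross_iff_interleave i] at hcross
    have : lowPos i (i, j) = 0 ∧ highPos i (i, j) = (j - i).val := by simp [lowPos, highPos]
    have := hpos q hq
    omega
  set Qin := Q.filter (highPos i · ≤ (j - i).val)
  set Qout := Q.filter (fun q => ¬ highPos i q ≤ (j - i).val)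
  by_cases hout : Qout = 0
  · have hQd : ∀ q ∈ Q, highPos i q ≤ (j - i).val := fun q hq => not_not.mp fun h =>
      Multiset.notMem_zero q (hout ▸ Multiset.mem_filter.mpr ⟨hq, h⟩)
    exact add_four_le_card_multiSupp_cons_of_nested hNC hDen hQ hQ0 hdn
      (fun q hq => ⟨(hpos q hq).1, hQd q hq⟩)
      (highPos_lt_of_lowPos_eq_one hnew (by omega) (by omega) hQ hQd)
  have hin : ∀ q ∈ (i + 1, j) ::ₘ Qin, 1 ≤ lowPos i q ∧ highPos i q ≤ (j - i).val := by
    intro q hq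
    rcases Multiset.mem_cons.mp hq with rfl | hq
    · have := lowPos_highPos_add_one (i := i) (j := j) (by omega) (by omega)
      omega
    · exact ⟨(hpos q (Multiset.mem_of_le (Multiset.filter_le _ _) hq)).1,
        (Multiset.mem_filter.mp hq).2⟩
  have hout' : ∀ q ∈ Qout, (j - i).val ≤ lowPos i q ∧ highPos i q ≤ n - 2 := by
    intro q hq
    obtain ⟨hqQ, hqd⟩ := Multiset.mem_filter.mp hq
    have := hpos q hqQ
    have := hside q hqQ
    omega
  rw [← Multiset.filter_add_not (highPos i · ≤ (j - i).val) Q, ← Multiset.cons_add,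
    multiSupp_add, Multiset.card_add]
  exact add_four_le_card_union i (j - i).val
    (fun x hx => (val_sub_mem_of_mem_multiSupp (by omega) hin hx).2)
    (fun x hx => (val_sub_mem_of_mem_multiSupp (by omega) hout' hx).1)
    (add_three_le_card_multiSupp_cons_add_one hDen ((Multiset.filter_le _ _).trans hQ) hd3 hdn)
    (hDen Qout ((Multiset.filter_le _ _).trans hQ) hout)

theorem add_four_le_card_multiSupp_cons_add_one {Ps Q : Multiset (ZMod n × ZMod n)}
    (hNC : NonCrossing Ps) (hDen : LocallyDense Ps)
    {i j : ZMod n} (hp : (i, j) ∈ Ps) (hnew : (i + 1, j) ∉ Ps ∧ (j, i + 1) ∉ Ps)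
    (hd3 : 3 ≤ (j - i).val) (hdn : (j - i).val + 2 ≤ n) (hQ : Q ≤ Ps.erase (i, j)) :
    Multiset.card Q + 4 ≤ (multiSupp ((i + 1, j) ::ₘ Q)).card := by
  by_cases hQ0 : Q = 0
  · subst hQ0
    simp [multiSupp, card_propSupp_add_one hd3 hdn]
  have hQPs : Q ≤ Ps := hQ.trans (Multiset.erase_le _ _)
  by_cases hi : i ∈ multiSupp Q
  · have hsub : multiSupp ((i, j) ::ₘ Q) ⊆ multiSupp ((i + 1, j) ::ₘ Q) := by
      rw [multiSupp_cons, multiSupp_cons]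
      refine Finset.union_subset ?_ Finset.subset_union_right
      intro x hx
      simp only [propSupp, Finset.mem_insert, Finset.mem_singleton] at hx
      rcases hx with rfl | rfl | rfl | rfl
      · exact Finset.mem_union_right _ hi
      all_goals exact Finset.mem_union_left _ (by simp [propSupp])
    have hle : (i, j) ::ₘ Q ≤ Ps := Multiset.cons_erase hp ▸ Multiset.cons_le_cons _ hQ
    have := hDen _ hle Multiset.cons_ne_zero
    have := Finset.card_le_card hsub
    rw [Multiset.card_cons] at *
    omega
  · exact add_four_le_card_multiSupp_cons_of_notMem hNC hDen hp hnew hd3 hdn hQPs hQ0 hi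

theorem not_cross_add_one {Ps : Multiset (ZMod n × ZMod n)}
    (hNC : NonCrossing Ps) {i j : ZMod n} (hp : (i, j) ∈ Ps)
    (hfar : ∀ m : ZMod n, ((i, m) ∈ Ps ∨ (m, i) ∈ Ps) → m ≠ j → ¬ Inside (i + 1) m j)
    (hn : n ≠ 1) (hd : 1 ≤ (j - i).val) : ∀ q ∈ Ps, ¬ Cross (i + 1, j) q := by
  intro q hq
  obtain ⟨hlow₁, hhigh₁⟩ := lowPos_highPos_add_one (i := i) (j := j) hn hd
  have hij := hNC (i, j) hp q hq
  rw [cross_iff_interleave i] at hij ⊢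
  have : lowPos i (i, j) = 0 ∧ highPos i (i, j) = (j - i).val := by simp [lowPos, highPos]
  rintro (h | h)
  · omega
  -- otherwise `q` joins `i` to a vertex strictly between `i + 1` and `j`
  rw [hlow₁, hhigh₁] at h
  obtain ⟨a, b⟩ := q
  simp only [lowPos, highPos] at h
  have hinside : ∀ m : ZMod n, (m - i).val = max (a - i).val (b - i).val →
      Inside (i + 1) m j := by
    intro m hm
    rw [inside_iff_val_sub i, val_add_one_sub_self hn]
    omega
  by_cases ha : (a - i).val = 0
  · have ha' : a = i := val_sub_eq_zero_iff.mp ha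
    refine hfar b (Or.inl (ha' ▸ hq)) (fun hb => ?_) (hinside b (by omega))
    rw [hb] at h
    omega
  · have hb : b = i := val_sub_eq_zero_iff.mp (by omega)
    refine hfar a (Or.inr (hb ▸ hq)) (fun haj => ?_) (hinside a (by omega))
    rw [haj] at h
    omega

end WilsonLoop

theorem statement13_general (n : ℕ) (Ps : Multiset (ZMod n × ZMod n))
    (hW : Admissible n Ps) (i j : ZMod n) (hp : (i, j) ∈ Ps)
    (h2 : j ≠ i - 1) (h3 : j ≠ i) (h4 : j ≠ i + 1) (h5 : j ≠ i + 2)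
    (hq : (i + 1, j) ∉ Ps ∧ (j, i + 1) ∉ Ps)
    (hfar : ∀ m : ZMod n, ((i, m) ∈ Ps ∨ (m, i) ∈ Ps) → m ≠ j →
      ¬ Inside (i + 1) m j) :
    Admissible n ((i + 1, j) ::ₘ Ps.erase (i, j)) := by
  obtain ⟨hNC, hDen, hGl⟩ := hW
  have hcard := Multiset.card_erase_add_one hp
  have : NeZero n := ⟨by omega⟩
  have hd3 := three_le_val_sub h3 h4 h5
  have hdn := val_sub_add_two_le h2
  have hnot_cross := not_cross_add_one hNC hp hfar (by omega) (by omega)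
  refine ⟨?_, fun P hP hP0 => ?_, by rw [Multiset.card_cons]; omega⟩
  · intro p hp' q hq'
    rcases Multiset.mem_cons.mp hp' with rfl | hp' <;>
      rcases Multiset.mem_cons.mp hq' with rfl | hq'
    · simp [Cross, Inside]
    · exact hnot_cross q (Multiset.mem_of_mem_erase hq')
    · exact (cross_comm _ _).not.mpr (hnot_cross p (Multiset.mem_of_mem_erase hp'))
    · exact hNC p (Multiset.mem_of_mem_erase hp') q (Multiset.mem_of_mem_erase hq')
  by_cases hmem : (i + 1, j) ∈ P
  · rw [← Multiset.cons_erase hmem, Multiset.card_cons]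
    refine add_four_le_card_multiSupp_cons_add_one hNC hDen hp hq hd3 hdn ?_
    simpa using Multiset.erase_le_erase (i + 1, j) hP
  · exact hDen P (((Multiset.le_cons_of_notMem hmem).mp hP).trans (Multiset.erase_le _ _)) hP0

/-- let `(Ps,[n])` be an admissible Wilson loop diagram and
`p = (i,j) ∈ Ps` with `j ∉ {i−2, i−1, i, i+1, i+2}`.  If `(i+1,j) ∉ Ps` and no
propagator `(i,m)` with `m ≠ j` has `m` strictly inside the cyclic interval from
`i+1` to `j` not containing `i` (so `x_{p,i}` is a factor of `R(V(Ps))`), then the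
diagram obtained by replacing `p` with `(i+1,j)` is admissible. -/
theorem statement13 (n : ℕ) (Ps : Multiset (ZMod n × ZMod n))
    (hW : Admissible n Ps) (i j : ZMod n) (hp : (i, j) ∈ Ps)
    (h1 : j ≠ i - 2) (h2 : j ≠ i - 1) (h3 : j ≠ i) (h4 : j ≠ i + 1) (h5 : j ≠ i + 2)
    (hq : (i + 1, j) ∉ Ps ∧ (j, i + 1) ∉ Ps)
    (hfar : ∀ m : ZMod n, ((i, m) ∈ Ps ∨ (m, i) ∈ Ps) → m ≠ j →
      ¬ Inside (i + 1) m j) :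
    Admissible n ((i + 1, j) ::ₘ Ps.erase (i, j)) :=
  statement13_general n Ps hW i j hp h2 h3 h4 h5 hq hfar
end
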